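/- arXiv:cs/0601091 — 3 statements merged into one kernel-verified Lean document; each statement's English description precedes it below -/
import Mathlib

section
/- Let b_1, ..., b_M be a basis of a lattice, and write b_i = b_i' + Σ_{j≠i} c_{ij} b_j where b_i' is orthogonal to all b_j, j ≠ i. Then for the orthogonality defect δ of the basis, ‖b_i‖ ≤ √δ · ‖b_i'‖. -/
/-!
Replacing `b i` by `b i + w`, with `w` in the span of the other vectors, is a unimodular change
of basis, so it leaves the Gram determinant unchanged. Hadamard's inequality for the new family
gives `det G ≤ ‖b i + w‖² ∏_{j ≠ i} ‖b j‖²`, which rearranges to `‖b i‖² ≤ δ ‖b i + w‖²`.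
Hadamard's inequality for Gram determinants is proved by induction, splitting off the component
of the last vector orthogonal to the others: the Gram determinant then factors as its squared
norm times the Gram determinant of the remaining vectors.
-/

open Finset

/-- Orthogonality defect of a family of vectors in ℂ^N (via the Gram determinant). -/
noncomputable def orthDefect {N M : ℕ} (b : Fin M → EuclideanSpace ℂ (Fin N)) : ℝ :=
  (∏ i, ‖b i‖ ^ 2) / (Matrix.det (Matrix.of fun i j => (inner ℂ (b i) (b j) : ℂ))).re

namespace Matrix

variable {𝕜 E : Type*} [RCLike 𝕜] [NormedAddCommGroup E] [InnerProductSpace 𝕜 E]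

lemma gram_sum_smul {m n : Type*} [Fintype n] (T : Matrix m n 𝕜) (v : n → E) :
    gram 𝕜 (fun k ↦ ∑ l, T k l • v l) = T.map star * gram 𝕜 v * Tᵀ := by
  ext k k'
  simp only [gram_apply, sum_inner, inner_sum, inner_smul_left, inner_smul_right, mul_apply,
    map_apply, transpose_apply, Finset.sum_mul, Finset.mul_sum, RCLike.star_def]
  exact sum_congr rfl fun _ _ ↦ sum_congr rfl fun _ _ ↦ by ring

lemma det_updateRow_one {n : Type*} [Fintype n] [DecidableEq n] (i : n) (c : n → 𝕜) :
    (updateRow (1 : Matrix n n 𝕜) i c).det = c i := by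
  have : c = ∑ j, c j • (1 : Matrix n n 𝕜) j := by
    ext k; simp [Finset.sum_apply, one_apply]
  rw [this, det_updateRow_sum, det_one]
  simp [Finset.sum_apply, one_apply]

lemma det_gram_update_add_of_mem_span {n : Type*} [Fintype n] [DecidableEq n] (v : n → E)
    (i : n) {w : E} (hw : w ∈ Submodule.span 𝕜 (v '' {i}ᶜ)) :
    (gram 𝕜 (Function.update v i (v i + w))).det = (gram 𝕜 v).det := by
  obtain ⟨l, hl, rfl⟩ := (Finsupp.mem_span_image_iff_linearCombination 𝕜).1 hw
  have hl_i : l i = 0 := Finsupp.notMem_support_iff.1 fun h ↦ hl h rfl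
  set T : Matrix n n 𝕜 := updateRow 1 i ((1 : Matrix n n 𝕜) i + ⇑l)
  have hT : T.det = 1 := by
    rw [det_updateRow_add, updateRow_eq_self, det_one, det_updateRow_one, hl_i, add_zero]
  have hu : Function.update v i (v i + Finsupp.linearCombination 𝕜 v l) =
      fun k ↦ ∑ j, T k j • v j := by
    ext1 k
    rcases eq_or_ne k i with rfl | hk
    · simp [T, Finsupp.linearCombination_apply, Finsupp.sum_fintype, add_smul, sum_add_distrib,
        one_apply]
    · simp [T, hk, one_apply]
  rw [hu, gram_sum_smul, det_mul, det_mul, det_transpose, hT, ← transpose_conjTranspose,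
    det_conjTranspose, det_transpose, hT, star_one, one_mul, mul_one]

open scoped InnerProductSpace

lemma det_gram_snoc_of_forall_inner_eq_zero {n : ℕ} (v : Fin n → E) {q : E}
    (hq : ∀ j, ⟪v j, q⟫_𝕜 = 0) :
    (gram 𝕜 (Fin.snoc v q : Fin (n + 1) → E)).det = (‖q‖ ^ 2 : 𝕜) * (gram 𝕜 v).det := by
  rw [det_succ_row _ (Fin.last n), Fintype.sum_eq_single (Fin.last n)]
  · have hminor : (gram 𝕜 (Fin.snoc v q : Fin (n + 1) → E)).submatrix Fin.castSucc
        Fin.castSucc = gram 𝕜 v := by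
      ext j k
      simp [gram_apply]
    simp [hminor, gram_apply, inner_self_eq_norm_sq_to_K]
  · intro j hj
    obtain ⟨k, rfl⟩ := Fin.exists_castSucc_eq.2 hj
    simp [gram_apply, inner_eq_zero_symm.1 (hq k)]

lemma re_det_gram_nonneg {n : Type*} [Fintype n] [DecidableEq n] (v : n → E) :
    0 ≤ RCLike.re (gram 𝕜 v).det :=
  (RCLike.nonneg_iff.1 (posSemidef_gram 𝕜 v).det_nonneg).1

lemma re_det_gram_pos {n : Type*} [Fintype n] [DecidableEq n] {v : n → E}
    (hv : LinearIndependent 𝕜 v) : 0 < RCLike.re (gram 𝕜 v).det :=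
  (RCLike.pos_iff.1 (posDef_gram_of_linearIndependent hv).det_pos).1

theorem re_det_gram_le_prod_norm_sq : ∀ {n : ℕ} (v : Fin n → E),
    RCLike.re (gram 𝕜 v).det ≤ ∏ i, ‖v i‖ ^ 2
  | 0, v => by simp
  | n + 1, v => by
    set K := Submodule.span 𝕜 (Set.range (Fin.init v))
    have : FiniteDimensional 𝕜 K := FiniteDimensional.span_of_finite 𝕜 (Set.finite_range _)
    set q := Kᗮ.starProjection (v (Fin.last n)) with hq_def
    have hq : ∀ j, ⟪Fin.init v j, q⟫_𝕜 = 0 := fun j ↦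
      Submodule.inner_right_of_mem_orthogonal (Submodule.subset_span (Set.mem_range_self j))
        (Kᗮ.starProjection_apply_mem _)
    have hdet : (gram 𝕜 v).det = (gram 𝕜 (Fin.snoc (Fin.init v) q)).det := by
      have hK : K ≤ Submodule.span 𝕜 (v '' {Fin.last n}ᶜ) :=
        Submodule.span_mono <| Set.range_subset_iff.2 fun j ↦
          ⟨j.castSucc, Fin.castSucc_ne_last j, rfl⟩
      rw [← Fin.update_snoc_last (x := v (Fin.last n)), Fin.snoc_init_self, hq_def,
        Submodule.starProjection_orthogonal_val, sub_eq_add_neg,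
        det_gram_update_add_of_mem_span v _ (hK (neg_mem (K.starProjection_apply_mem _)))]
    rw [hdet, det_gram_snoc_of_forall_inner_eq_zero _ hq, ← RCLike.ofReal_pow,
      RCLike.re_ofReal_mul, Fin.prod_univ_castSucc, mul_comm _ (‖v (Fin.last n)‖ ^ 2)]
    exact mul_le_mul (pow_le_pow_left₀ (norm_nonneg _) (Kᗮ.norm_starProjection_apply_le _) 2)
      (re_det_gram_le_prod_norm_sq _) (re_det_gram_nonneg _) (by positivity)

theorem sq_norm_mul_re_det_gram_le {n : ℕ} (v : Fin n → E) (i : Fin n) {w : E}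
    (hw : w ∈ Submodule.span 𝕜 (v '' {i}ᶜ)) :
    ‖v i‖ ^ 2 * RCLike.re (gram 𝕜 v).det ≤ ‖v i + w‖ ^ 2 * ∏ j, ‖v j‖ ^ 2 := by
  set P := ∏ j ∈ univ.erase i, ‖v j‖ ^ 2
  have hupdate : ∏ j, ‖Function.update v i (v i + w) j‖ ^ 2 = ‖v i + w‖ ^ 2 * P := by
    rw [← mul_prod_erase _ _ (mem_univ i), Function.update_self]
    congr 1
    exact prod_congr rfl fun j hj ↦ by rw [Function.update_of_ne (ne_of_mem_erase hj)]
  have hle : RCLike.re (gram 𝕜 v).det ≤ ‖v i + w‖ ^ 2 * P := by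
    rw [← det_gram_update_add_of_mem_span v i hw, ← hupdate]
    exact re_det_gram_le_prod_norm_sq _
  calc ‖v i‖ ^ 2 * RCLike.re (gram 𝕜 v).det ≤ ‖v i‖ ^ 2 * (‖v i + w‖ ^ 2 * P) := by gcongr
    _ = ‖v i + w‖ ^ 2 * ∏ j, ‖v j‖ ^ 2 := by rw [← mul_prod_erase _ _ (mem_univ i)]; ring

end Matrix

open Matrix in
theorem stmt2_general {N M : ℕ} (b : Fin M → EuclideanSpace ℂ (Fin N))
    (hli : LinearIndependent ℂ b) (i : Fin M)
    (b' : EuclideanSpace ℂ (Fin N)) (c : Fin M → ℂ)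
    -- decomposition b i = b' + ∑_{j ≠ i} c j • b j
    (hdec : b i = b' + ∑ j ∈ Finset.univ.erase i, c j • b j) :
    ‖b i‖ ≤ Real.sqrt (orthDefect b) * ‖b'‖ := by
  have hb' : b i + -∑ j ∈ univ.erase i, c j • b j = b' := by rw [hdec]; abel
  have hspan : -∑ j ∈ univ.erase i, c j • b j ∈ Submodule.span ℂ (b '' {i}ᶜ) :=
    neg_mem <| Submodule.sum_mem _ fun j hj ↦ Submodule.smul_mem _ _ <|
      Submodule.subset_span ⟨j, ne_of_mem_erase hj, rfl⟩
  have hkey := sq_norm_mul_re_det_gram_le b i hspan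
  rw [hb'] at hkey
  have hsq : ‖b i‖ ^ 2 ≤ orthDefect b * ‖b'‖ ^ 2 := by
    have hδ : orthDefect b = (∏ j, ‖b j‖ ^ 2) / RCLike.re (gram ℂ b).det := rfl
    rw [hδ, div_mul_eq_mul_div, le_div_iff₀ (re_det_gram_pos hli), mul_comm _ (‖b'‖ ^ 2)]
    exact hkey
  calc ‖b i‖ = √(‖b i‖ ^ 2) := (Real.sqrt_sq (norm_nonneg _)).symm
    _ ≤ √(orthDefect b * ‖b'‖ ^ 2) := Real.sqrt_le_sqrt hsq
    _ = √(orthDefect b) * ‖b'‖ := by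
      rw [Real.sqrt_mul' _ (sq_nonneg _), Real.sqrt_sq (norm_nonneg _)]

theorem stmt2 {N M : ℕ} (b : Fin M → EuclideanSpace ℂ (Fin N))
    (hli : LinearIndependent ℂ b) (i : Fin M)
    (b' : EuclideanSpace ℂ (Fin N)) (c : Fin M → ℂ)
    -- decomposition b i = b' + ∑_{j ≠ i} c j • b j
    (hdec : b i = b' + ∑ j ∈ Finset.univ.erase i, c j • b j)
    -- b' is orthogonal to every b j, j ≠ i
    (horth : ∀ j, j ≠ i → (inner ℂ (b j) b' : ℂ) = 0) :
    ‖b i‖ ≤ Real.sqrt (orthDefect b) * ‖b'‖ :=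
  stmt2_general b hli i b' c hdec
end

section
/- Let h ∈ ℂ^{N_t} be a vector with i.i.d. unit-variance complex Gaussian entries and let R ≥ 1 be a fixed rate. Then the outage probability P_out = Pr{log₂(1 + ρ‖h‖²) ≤ R} satisfies P_out ≥ c · 2^{N_t R} / ρ^{N_t} for all ρ > 2^{R-1}, where c = e^{-1}/(2^{N_t} N_t!). Consequently lim_{ρ→∞} (−log P_out)/(log ρ) ≤ N_t. -/
open MeasureTheory Real Filter

/-- Euclidean norm of a complex vector. -/
noncomputable def cnorm {N : ℕ} (v : Fin N → ℂ) : ℝ :=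
  Real.sqrt (∑ i, Complex.normSq (v i))

/-- The law of a `CN(0, I_N)` vector in `ℂ^N`. -/
noncomputable def stdComplexGaussian (N : ℕ) : Measure (Fin N → ℂ) :=
  (volume : Measure (Fin N → ℂ)).withDensity fun h =>
    ENNReal.ofReal (Real.exp (-(cnorm h) ^ 2) / π ^ N)

/-- Outage probability of a fixed-rate `R` MISO link at SNR `ρ`. -/
noncomputable def Pout (Nt : ℕ) (R ρ : ℝ) : ENNReal :=
  stdComplexGaussian Nt {h | Real.logb 2 (1 + ρ * (cnorm h) ^ 2) ≤ R}

/-!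
For `ρ > 0` the outage event is the ball `‖h‖² ≤ (2 ^ R - 1) / ρ`, and the ball `‖h‖² ≤ t` has
Lebesgue volume `(π t) ^ N / N!`. For `ρ > 2 ^ (R - 1)` the outage ball contains the ball of
radius² `t = 2 ^ (R - 1) / ρ < 1` (as `R ≥ 1`), on which the Gaussian density is at least
`e⁻¹ / π ^ N`; this is the lower bound. Hence `-log P_out ≤ N log ρ + O(1)`, while `P_out ≤ 1`
once `ρ ≥ 2 ^ R`, which gives the bound on the diversity order.
-/

open scoped Nat

lemma cnorm_sq_eq_sum {N : ℕ} (v : Fin N → ℂ) : cnorm v ^ 2 = ∑ i, Complex.normSq (v i) :=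
  Real.sq_sqrt (Finset.sum_nonneg fun _ _ => Complex.normSq_nonneg _)

@[fun_prop]
lemma continuous_cnorm {N : ℕ} : Continuous (cnorm : (Fin N → ℂ) → ℝ) := by
  unfold cnorm
  fun_prop

lemma volume_cnorm_sq_le {N : ℕ} {t : ℝ} (ht : 0 ≤ t) :
    volume {h : Fin N → ℂ | cnorm h ^ 2 ≤ t} = ENNReal.ofReal ((π * t) ^ N / N !) := by
  rcases N.eq_zero_or_pos with rfl | hN
  · have huniv : {h : Fin 0 → ℂ | cnorm h ^ 2 ≤ t} = Set.univ := by
      ext h; simpa [cnorm_sq_eq_sum] using ht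
    rw [huniv, volume_pi, Measure.pi_empty_univ]
    simp
  have : Nonempty (Fin N) := Fin.pos_iff_nonempty.mp hN
  have hset : {h : Fin N → ℂ | cnorm h ^ 2 ≤ t} =
      {h | (∑ i, ‖h i‖ ^ (2 : ℝ)) ^ (1 / (2 : ℝ)) ≤ √t} := by
    ext h
    simp only [Set.mem_ofPred_eq, cnorm_sq_eq_sum, Real.rpow_two, Complex.sq_norm,
      ← Real.sqrt_eq_rpow, Real.sqrt_le_sqrt_iff ht]
  rw [hset, Complex.volume_sum_rpow_le (ι := Fin N) one_le_two, Fintype.card_fin,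
    ← ENNReal.ofReal_pow (by positivity), pow_mul, Real.sq_sqrt ht,
    ← ENNReal.ofReal_mul (by positivity)]
  norm_num [Real.Gamma_nat_eq_factorial]
  ring_nf

lemma mul_volume_le_stdComplexGaussian {N : ℕ} {a : ℝ} {s : Set (Fin N → ℂ)}
    (hs : s ⊆ {h | cnorm h ^ 2 ≤ a}) :
    ENNReal.ofReal (Real.exp (-a) / π ^ N) * volume s ≤ stdComplexGaussian N s := by
  rw [stdComplexGaussian, withDensity_apply' _ s, ← setLIntegral_const]
  refine setLIntegral_mono (by fun_prop) fun h hh => ?_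
  gcongr
  exact hs hh

lemma stdComplexGaussian_le_mul_volume (N : ℕ) (s : Set (Fin N → ℂ)) :
    stdComplexGaussian N s ≤ ENNReal.ofReal (1 / π ^ N) * volume s := by
  rw [stdComplexGaussian, withDensity_apply' _ s, ← setLIntegral_const]
  refine setLIntegral_mono measurable_const fun h _ => ?_
  gcongr
  exact Real.exp_le_one_iff.mpr (by simp only [neg_nonpos]; positivity)

lemma Pout_eq_stdComplexGaussian {N : ℕ} {R ρ : ℝ} (hρ : 0 < ρ) :
    Pout N R ρ = stdComplexGaussian N {h | cnorm h ^ 2 ≤ (2 ^ R - 1) / ρ} := by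
  unfold Pout
  congr 1
  ext h
  have hpos : 0 < 1 + ρ * cnorm h ^ 2 := by positivity
  rw [Set.mem_ofPred_eq, Set.mem_ofPred_eq, Real.logb_le_iff_le_rpow one_lt_two hpos,
    le_div_iff₀ hρ]
  constructor <;> intro <;> linarith

lemma two_rpow_pred_le_two_rpow_sub_one {R : ℝ} (hR : 1 ≤ R) :
    (2 : ℝ) ^ (R - 1) ≤ 2 ^ R - 1 := by
  have h : (2 : ℝ) ^ (R - 1) = 2 ^ R / 2 := Real.rpow_sub_one two_ne_zero R
  have : (1 : ℝ) ≤ 2 ^ (R - 1) := Real.one_le_rpow one_le_two (by linarith)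
  linarith

lemma le_Pout {N : ℕ} {R ρ : ℝ} (hR : 1 ≤ R) (hρ : (2 : ℝ) ^ (R - 1) < ρ) :
    ENNReal.ofReal ((Real.exp (-1) / (2 ^ N * N !)) * (2 : ℝ) ^ ((N : ℝ) * R) / ρ ^ N) ≤
      Pout N R ρ := by
  have hρ0 : 0 < ρ := (Real.rpow_pos_of_pos two_pos _).trans hρ
  set t := (2 : ℝ) ^ (R - 1) / ρ with ht
  have ht1 : t < 1 := (div_lt_one hρ0).mpr hρ
  have hts : t ≤ (2 ^ R - 1) / ρ :=
    div_le_div_of_nonneg_right (two_rpow_pred_le_two_rpow_sub_one hR) hρ0.le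
  calc ENNReal.ofReal ((Real.exp (-1) / (2 ^ N * N !)) * (2 : ℝ) ^ ((N : ℝ) * R) / ρ ^ N)
      = ENNReal.ofReal (Real.exp (-1) / π ^ N) * volume {h : Fin N → ℂ | cnorm h ^ 2 ≤ t} := by
        rw [volume_cnorm_sq_le (by positivity), ← ENNReal.ofReal_mul (by positivity)]
        congr 1
        rw [mul_comm (N : ℝ) R, Real.rpow_mul_natCast zero_le_two, ht,
          Real.rpow_sub_one two_ne_zero, mul_div_assoc', mul_pow, div_pow, div_pow]
        field_simp
    _ ≤ stdComplexGaussian N {h | cnorm h ^ 2 ≤ t} :=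
        mul_volume_le_stdComplexGaussian fun h hh => le_trans hh ht1.le
    _ ≤ Pout N R ρ := by
        rw [Pout_eq_stdComplexGaussian hρ0]
        exact measure_mono fun h hh => le_trans hh hts

lemma Pout_le {N : ℕ} {R ρ : ℝ} (hR : 0 ≤ R) (hρ : 0 < ρ) :
    Pout N R ρ ≤ ENNReal.ofReal (((2 ^ R - 1) / ρ) ^ N / N !) := by
  have hs : 0 ≤ (2 ^ R - 1) / ρ := by
    have : (1 : ℝ) ≤ 2 ^ R := Real.one_le_rpow one_le_two hR
    exact div_nonneg (by linarith) hρ.le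
  rw [Pout_eq_stdComplexGaussian hρ]
  refine (stdComplexGaussian_le_mul_volume N _).trans_eq ?_
  rw [volume_cnorm_sq_le hs, ← ENNReal.ofReal_mul (by positivity)]
  congr 1
  rw [mul_pow]
  field_simp

lemma Pout_le_one {N : ℕ} {R ρ : ℝ} (hR : 0 ≤ R) (hρ : 2 ^ R - 1 ≤ ρ) (hρ0 : 0 < ρ) :
    Pout N R ρ ≤ 1 := by
  have hs : 0 ≤ (2 ^ R - 1) / ρ :=
    div_nonneg (by linarith [Real.one_le_rpow one_le_two hR]) hρ0.le
  have hs1 : (2 ^ R - 1) / ρ ≤ 1 := (div_le_one hρ0).mpr hρ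
  refine (Pout_le hR hρ0).trans (ENNReal.ofReal_le_one.mpr ?_)
  exact div_le_one_of_le₀ ((pow_le_one₀ hs hs1).trans (by exact_mod_cast N.factorial_pos))
    (by positivity)

lemma limsup_neg_log_div_log_le {p : ℝ → ℝ} {c d : ℝ} (hc : 0 < c)
    (hp : ∀ᶠ ρ in atTop, c / ρ ^ d ≤ p ρ ∧ p ρ ≤ 1) :
    limsup (fun ρ => -Real.log (p ρ) / Real.log ρ) atTop ≤ d := by
  set g := fun ρ : ℝ => -Real.log c / Real.log ρ + d
  have hg : Tendsto g atTop (nhds d) := by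
    simpa using (tendsto_const_nhds.div_atTop Real.tendsto_log_atTop).add_const d
  have hbounds : ∀ᶠ ρ in atTop,
      0 ≤ -Real.log (p ρ) / Real.log ρ ∧ -Real.log (p ρ) / Real.log ρ ≤ g ρ := by
    filter_upwards [hp, eventually_gt_atTop 1] with ρ ⟨hlow, hle1⟩ hρ
    have hlog : 0 < Real.log ρ := Real.log_pos hρ
    have hρ0 : 0 < ρ := zero_lt_one.trans hρ
    have hp0 : 0 < p ρ := (by positivity : 0 < c / ρ ^ d).trans_le hlow
    refine ⟨div_nonneg (neg_nonneg.mpr (Real.log_nonpos hp0.le hle1)) hlog.le, ?_⟩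
    have : Real.log c - d * Real.log ρ ≤ Real.log (p ρ) := by
      rw [← Real.log_rpow hρ0, ← Real.log_div hc.ne' (by positivity)]
      exact Real.log_le_log (by positivity) hlow
    rw [div_le_iff₀ hlog, add_mul, div_mul_cancel₀ _ hlog.ne']
    linarith
  calc limsup (fun ρ => -Real.log (p ρ) / Real.log ρ) atTop ≤ limsup g atTop :=
        limsup_le_limsup (hbounds.mono fun _ h => h.2)
          (IsCoboundedUnder.of_frequently_ge (hbounds.mono fun _ h => h.1).frequently)
          hg.isBoundedUnder_le
    _ = d := hg.limsup_eq

theorem stmt13_general (Nt : ℕ) (R : ℝ) (hR : 1 ≤ R) :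
    (∀ ρ : ℝ, (2 : ℝ) ^ (R - 1) < ρ →
      ENNReal.ofReal ((Real.exp (-1) / (2 ^ Nt * (Nat.factorial Nt))) *
          (2 : ℝ) ^ ((Nt : ℝ) * R) / ρ ^ Nt) ≤ Pout Nt R ρ) ∧
    Filter.limsup (fun ρ : ℝ =>
        (-Real.log ((Pout Nt R ρ).toReal)) / Real.log ρ) Filter.atTop ≤ (Nt : ℝ) := by
  refine ⟨fun ρ hρ => le_Pout hR hρ, limsup_neg_log_div_log_le
    (c := Real.exp (-1) / (2 ^ Nt * Nt !) * 2 ^ ((Nt : ℝ) * R)) (by positivity) ?_⟩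
  filter_upwards [eventually_ge_atTop ((2 : ℝ) ^ R)] with ρ hρ
  have hρ0 : 0 < ρ := (Real.rpow_pos_of_pos two_pos R).trans_le hρ
  have hlt : (2 : ℝ) ^ (R - 1) < ρ :=
    (Real.rpow_lt_rpow_of_exponent_lt one_lt_two (by linarith)).trans_le hρ
  have hle : Pout Nt R ρ ≤ 1 := Pout_le_one (by linarith) (by linarith) hρ0
  rw [Real.rpow_natCast]
  exact ⟨(ENNReal.ofReal_le_iff_le_toReal (ne_top_of_le_ne_top ENNReal.one_ne_top hle)).mp
      (le_Pout hR hlt), ENNReal.toReal_le_of_le_ofReal zero_le_one (by simpa using hle)⟩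

theorem stmt13 (Nt : ℕ) (hNt : 1 ≤ Nt) (R : ℝ) (hR : 1 ≤ R) :
    (∀ ρ : ℝ, (2 : ℝ) ^ (R - 1) < ρ →
      ENNReal.ofReal ((Real.exp (-1) / (2 ^ Nt * (Nat.factorial Nt))) *
          (2 : ℝ) ^ ((Nt : ℝ) * R) / ρ ^ Nt) ≤ Pout Nt R ρ) ∧
    Filter.limsup (fun ρ : ℝ =>
        (-Real.log ((Pout Nt R ρ).toReal)) / Real.log ρ) Filter.atTop ≤ (Nt : ℝ) :=
  stmt13_general Nt R hR
end

section
/- For N_t ≥ 1, the series Σ_{i=0}^∞ 2^{N_t(i+3)} e^{−2^i} converges; consequently, if for all γ > 1, Pr{d² ≤ γ/ρ} ≤ c γ^{N_t} ρ^{−N_t} (ln ρ)^{N_t+1} and Pr{|w|² ≥ θ/ρ} ≤ e^{−θ}, then a layered union bound gives Pr{|w|² ≥ d²/4} ≤ c' ρ^{−N_t} (ln ρ)^{N_t+1} for all sufficiently large ρ, where c' depends only on N_t and c. -/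
/-!
Split the event `d² / 4 ≤ |w|²` according to the dyadic shell `2^(i+2)/ρ ≤ d² ≤ 2^(i+3)/ρ`
containing `d²`, plus the core `d² ≤ 4/ρ`. On the `i`-th shell the event forces `|w|² ≥ 2^i/ρ`,
so by independence its probability is at most `c 2^(Nt(i+3)) ρ^(-Nt) (ln ρ)^(Nt+1) · e^(-2^i)`.
The doubly exponential decay of `e^(-2^i)` beats the geometric growth of `2^(Nt(i+3))`, so these
bounds sum to a constant multiple of `ρ^(-Nt) (ln ρ)^(Nt+1)`.
-/

open MeasureTheory Real ProbabilityTheory Filter Topology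

theorem summable_pow_mul_exp_neg_two_pow (r : ℝ) :
    Summable fun i : ℕ => r ^ i * exp (-2 ^ i) := by
  have hsmall : ∀ᶠ n : ℕ in atTop, |r| * exp (-2 ^ n) ≤ 1 / 2 := by
    have hlim : Tendsto (fun n : ℕ => |r| * exp (-2 ^ n)) atTop (𝓝 0) := by
      simpa using (tendsto_exp_atBot.comp (tendsto_neg_atTop_atBot.comp
        (tendsto_pow_atTop_atTop_of_one_lt one_lt_two))).const_mul |r|
    exact hlim.eventually_le_const (by norm_num)
  refine summable_of_ratio_norm_eventually_le (by norm_num : (1 / 2 : ℝ) < 1) ?_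
  filter_upwards [hsmall] with n hn
  have hratio : ‖r ^ (n + 1) * exp (-2 ^ (n + 1))‖ =
      |r| * exp (-2 ^ n) * ‖r ^ n * exp (-2 ^ n)‖ := by
    simp only [norm_mul, norm_pow, Real.norm_eq_abs, abs_exp]
    rw [show (2 : ℝ) ^ (n + 1) = 2 ^ n + 2 ^ n by ring, neg_add, exp_add]
    ring
  rw [hratio]
  exact mul_le_mul_of_nonneg_right hn (norm_nonneg _)

theorem summable_two_pow_mul_exp_neg_two_pow (N : ℕ) :
    Summable fun i : ℕ => (2 : ℝ) ^ (N * (i + 3)) * exp (-2 ^ i) := by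
  refine ((summable_pow_mul_exp_neg_two_pow (2 ^ N)).mul_left (2 ^ (3 * N))).congr fun i => ?_
  rw [← pow_mul, ← mul_assoc, ← pow_add]
  ring_nf

theorem exists_dyadic_shell {ρ x y : ℝ} (hρ : 0 < ρ) (hx : 4 / ρ ≤ x) (hxy : x / 4 ≤ y) :
    ∃ i : ℕ, x ≤ 2 ^ (i + 3) / ρ ∧ 2 ^ i / ρ ≤ y := by
  have hone : 1 ≤ ρ * x / 4 := by
    rw [div_le_iff₀ hρ] at hx
    linarith
  obtain ⟨i, hlo, hhi⟩ := exists_nat_pow_near hone one_lt_two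
  refine ⟨i, ?_, ?_⟩
  · rw [le_div_iff₀ hρ]
    rw [pow_succ] at hhi
    rw [pow_add]
    linarith
  · rw [div_le_iff₀ hρ]
    nlinarith

theorem measure_sq_div_four_le_sq_le_tsum {Ω : Type*} [MeasurableSpace Ω] {μ : Measure Ω}
    {X Y : Ω → ℝ} (hXY : IndepFun X Y μ) {ρ : ℝ} (hρ : 0 < ρ) :
    μ {ω | X ω ^ 2 / 4 ≤ Y ω ^ 2} ≤
      μ {ω | X ω ^ 2 ≤ 4 / ρ} +
        ∑' i : ℕ, μ {ω | X ω ^ 2 ≤ 2 ^ (i + 3) / ρ} * μ {ω | 2 ^ i / ρ ≤ Y ω ^ 2} := by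
  have hcover : {ω | X ω ^ 2 / 4 ≤ Y ω ^ 2} ⊆ {ω | X ω ^ 2 ≤ 4 / ρ} ∪
      ⋃ i : ℕ, {ω | X ω ^ 2 ≤ 2 ^ (i + 3) / ρ} ∩ {ω | 2 ^ i / ρ ≤ Y ω ^ 2} := by
    intro ω hω
    rcases le_or_gt (X ω ^ 2) (4 / ρ) with hcore | hshell
    · exact Or.inl hcore
    · exact Or.inr (Set.mem_iUnion.2 (exists_dyadic_shell hρ hshell.le hω))
  have hindep (i : ℕ) :
      μ ({ω | X ω ^ 2 ≤ 2 ^ (i + 3) / ρ} ∩ {ω | 2 ^ i / ρ ≤ Y ω ^ 2}) =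
        μ {ω | X ω ^ 2 ≤ 2 ^ (i + 3) / ρ} * μ {ω | 2 ^ i / ρ ≤ Y ω ^ 2} :=
    hXY.measure_inter_preimage_eq_mul {x | x ^ 2 ≤ 2 ^ (i + 3) / ρ} {y | 2 ^ i / ρ ≤ y ^ 2}
      (measurableSet_le (by fun_prop) measurable_const)
      (measurableSet_le measurable_const (by fun_prop))
  calc μ {ω | X ω ^ 2 / 4 ≤ Y ω ^ 2}
      ≤ μ ({ω | X ω ^ 2 ≤ 4 / ρ} ∪
          ⋃ i : ℕ, {ω | X ω ^ 2 ≤ 2 ^ (i + 3) / ρ} ∩ {ω | 2 ^ i / ρ ≤ Y ω ^ 2}) :=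
        measure_mono hcover
    _ ≤ μ {ω | X ω ^ 2 ≤ 4 / ρ} +
          ∑' i : ℕ, μ ({ω | X ω ^ 2 ≤ 2 ^ (i + 3) / ρ} ∩ {ω | 2 ^ i / ρ ≤ Y ω ^ 2}) :=
        (measure_union_le _ _).trans (add_le_add_right (measure_iUnion_le _) _)
    _ = _ := by simp_rw [hindep]

theorem measure_shell_mul_le {Ω : Type*} [MeasurableSpace Ω] {μ : Measure Ω} {d w : Ω → ℝ}
    {N : ℕ} {c ρ : ℝ}
    (hd : ∀ γ : ℝ, 1 < γ →
      μ {ω | d ω ^ 2 ≤ γ / ρ} ≤ ENNReal.ofReal (c * γ ^ N / ρ ^ N * log ρ ^ (N + 1)))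
    (hw : ∀ θ : ℝ, 0 < θ → μ {ω | θ / ρ ≤ w ω ^ 2} ≤ ENNReal.ofReal (exp (-θ))) (i : ℕ) :
    μ {ω | d ω ^ 2 ≤ 2 ^ (i + 3) / ρ} * μ {ω | 2 ^ i / ρ ≤ w ω ^ 2} ≤
      ENNReal.ofReal (c / ρ ^ N * log ρ ^ (N + 1) * (2 ^ (N * (i + 3)) * exp (-2 ^ i))) := by
  have hγ : (1 : ℝ) < 2 ^ (i + 3) := one_lt_pow₀ one_lt_two (by omega)
  calc _ ≤ ENNReal.ofReal (c * (2 ^ (i + 3)) ^ N / ρ ^ N * log ρ ^ (N + 1)) *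
        ENNReal.ofReal (exp (-2 ^ i)) := mul_le_mul' (hd _ hγ) (hw _ (by positivity))
    _ = _ := by
      rw [← ENNReal.ofReal_mul' (exp_nonneg _), ← pow_mul, mul_comm (i + 3)]
      ring_nf

theorem stmt19_general (Nt : ℕ) (c : ℝ) (hc : 0 < c) :
    -- the layered series converges
    Summable (fun i : ℕ => (2 : ℝ) ^ (Nt * (i + 3)) * Real.exp (-(2 : ℝ) ^ i)) ∧
    -- and the layered union bound
    ∃ c' ρ₀ : ℝ, 0 < c' ∧ 1 < ρ₀ ∧
      ∀ ρ : ℝ, ρ₀ ≤ ρ →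
        ∀ (Ω : Type) [MeasurableSpace Ω] (μ : Measure Ω), IsProbabilityMeasure μ →
          ∀ d w : Ω → ℝ, Measurable d → Measurable w → IndepFun d w μ →
            -- tail bound on the minimum distance d
            (∀ γ : ℝ, 1 < γ →
              μ {ω | (d ω) ^ 2 ≤ γ / ρ} ≤
                ENNReal.ofReal (c * γ ^ Nt / ρ ^ Nt * (Real.log ρ) ^ (Nt + 1))) →
            -- tail bound on the noise w
            (∀ θ : ℝ, 0 < θ → μ {ω | θ / ρ ≤ (w ω) ^ 2} ≤ ENNReal.ofReal (Real.exp (-θ))) →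
            μ {ω | (d ω) ^ 2 / 4 ≤ (w ω) ^ 2} ≤
              ENNReal.ofReal (c' / ρ ^ Nt * (Real.log ρ) ^ (Nt + 1)) := by
  set a : ℕ → ℝ := fun i => 2 ^ (Nt * (i + 3)) * exp (-2 ^ i)
  have ha : Summable a := summable_two_pow_mul_exp_neg_two_pow Nt
  have ha0 (i : ℕ) : 0 ≤ a i := by simp only [a]; positivity
  refine ⟨ha, c * (4 ^ Nt + ∑' i, a i), 2, by positivity, one_lt_two, ?_⟩
  intro ρ hρ Ω _ μ _ d w _ _ hdw hd hw
  set K := c / ρ ^ Nt * log ρ ^ (Nt + 1)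
  have hlog : 0 ≤ log ρ := log_nonneg (by linarith)
  have hK : 0 ≤ K := by positivity
  calc μ {ω | d ω ^ 2 / 4 ≤ w ω ^ 2}
      ≤ μ {ω | d ω ^ 2 ≤ 4 / ρ} +
          ∑' i : ℕ, μ {ω | d ω ^ 2 ≤ 2 ^ (i + 3) / ρ} * μ {ω | 2 ^ i / ρ ≤ w ω ^ 2} :=
        measure_sq_div_four_le_sq_le_tsum hdw (by linarith)
    _ ≤ ENNReal.ofReal (c * 4 ^ Nt / ρ ^ Nt * log ρ ^ (Nt + 1)) +
          ∑' i, ENNReal.ofReal (K * a i) :=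
        add_le_add (hd 4 (by norm_num)) (ENNReal.tsum_le_tsum (measure_shell_mul_le hd hw))
    _ = ENNReal.ofReal (c * (4 ^ Nt + ∑' i, a i) / ρ ^ Nt * log ρ ^ (Nt + 1)) := by
      rw [← ENNReal.ofReal_tsum_of_nonneg (fun i => mul_nonneg hK (ha0 i)) (ha.mul_left K),
        tsum_mul_left, ← ENNReal.ofReal_add (by positivity) (mul_nonneg hK (tsum_nonneg ha0))]
      congr 1
      simp only [K]
      ring

theorem stmt19 (Nt : ℕ) (hNt : 1 ≤ Nt) (c : ℝ) (hc : 0 < c) :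
    -- the layered series converges
    Summable (fun i : ℕ => (2 : ℝ) ^ (Nt * (i + 3)) * Real.exp (-(2 : ℝ) ^ i)) ∧
    -- and the layered union bound
    ∃ c' ρ₀ : ℝ, 0 < c' ∧ 1 < ρ₀ ∧
      ∀ ρ : ℝ, ρ₀ ≤ ρ →
        ∀ (Ω : Type) [MeasurableSpace Ω] (μ : Measure Ω), IsProbabilityMeasure μ →
          ∀ d w : Ω → ℝ, Measurable d → Measurable w → IndepFun d w μ →
            -- tail bound on the minimum distance d
            (∀ γ : ℝ, 1 < γ →
              μ {ω | (d ω) ^ 2 ≤ γ / ρ} ≤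
                ENNReal.ofReal (c * γ ^ Nt / ρ ^ Nt * (Real.log ρ) ^ (Nt + 1))) →
            -- tail bound on the noise w
            (∀ θ : ℝ, 0 < θ → μ {ω | θ / ρ ≤ (w ω) ^ 2} ≤ ENNReal.ofReal (Real.exp (-θ))) →
            μ {ω | (d ω) ^ 2 / 4 ≤ (w ω) ^ 2} ≤
              ENNReal.ofReal (c' / ρ ^ Nt * (Real.log ρ) ^ (Nt + 1)) :=
  stmt19_general Nt c hc
end
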